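/- Proposition 1 (the δISS condition implies the ISS condition): fix λ̌ ≥ 1, matrices W_z, W_f, W_r ∈ ℝ^{n_x×n_u}, U_z, U_f, U_r ∈ ℝ^{n_x×n_x} and vectors b_z, b_f, b_r ∈ ℝ^{n_x}, and set σ̌_z = σ(‖[W_z λ̌U_z b_z]‖_∞), σ̌_f = σ(‖[W_f λ̌U_f b_f]‖_∞), φ̌_r = tanh(‖[W_r λ̌U_r b_r]‖_∞), σ̄_f = σ(‖[W_f U_f b_f]‖_∞). If ‖U_r‖_∞ ( (1/4) λ̌ ‖U_f‖_∞ + σ̌_f ) < 1 − (1/4) ((λ̌ + φ̌_r)/(1 − σ̌_z)) ‖U_z‖_∞, then ‖U_r‖_∞ · σ̄_f < 1. -/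

import Mathlib

open Real

/-- The sigmoid activation function. -/
noncomputable def sigmoid (s : ℝ) : ℝ := 1 / (1 + Real.exp (-s))

/-- Induced infinity norm of a matrix (maximum absolute row sum). -/
noncomputable def matNorm {n m : ℕ} (A : Matrix (Fin n) (Fin m) ℝ) : ℝ :=
  ⨆ i, ∑ j, |A i j|

/-- Infinity norm of the horizontal concatenation `[A B c]`. -/
noncomputable def catNorm {n m p : ℕ} (A : Matrix (Fin n) (Fin m) ℝ)
    (B : Matrix (Fin n) (Fin p) ℝ) (c : Fin n → ℝ) : ℝ :=
  ⨆ i, (∑ j, |A i j| + ∑ j, |B i j| + |c i|)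

/-! The right-hand side of the δISS condition is at most `1`, and scaling `U_f` by `λ̌ ≥ 1` can only
enlarge the row sums of `[W_f U_f b_f]`, so `σ̄_f ≤ σ̌_f ≤ λ̌ ‖U_f‖_∞ / 4 + σ̌_f`. -/

theorem sigmoid_eq_real_sigmoid : _root_.sigmoid = Real.sigmoid :=
  funext fun _ => one_div _

theorem sigmoid_lt_one (s : ℝ) : _root_.sigmoid s < 1 :=
  sigmoid_eq_real_sigmoid ▸ Real.sigmoid_lt_one s

theorem sigmoid_monotone : Monotone _root_.sigmoid :=
  sigmoid_eq_real_sigmoid ▸ Real.sigmoid_monotone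

theorem tanh_nonneg {x : ℝ} (hx : 0 ≤ x) : 0 ≤ tanh x := by
  rw [tanh_eq_sinh_div_cosh]
  exact div_nonneg (sinh_nonneg_iff.2 hx) (cosh_pos x).le

theorem matNorm_nonneg {n m : ℕ} (A : Matrix (Fin n) (Fin m) ℝ) : 0 ≤ matNorm A :=
  Real.iSup_nonneg fun _ => Finset.sum_nonneg fun _ _ => abs_nonneg _

theorem catNorm_nonneg {n m p : ℕ} (A : Matrix (Fin n) (Fin m) ℝ)
    (B : Matrix (Fin n) (Fin p) ℝ) (c : Fin n → ℝ) : 0 ≤ catNorm A B c :=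
  Real.iSup_nonneg fun _ => by positivity

theorem catNorm_mono_abs {n m p : ℕ} (A : Matrix (Fin n) (Fin m) ℝ)
    {B B' : Matrix (Fin n) (Fin p) ℝ} (c : Fin n → ℝ) (hB : ∀ i j, |B i j| ≤ |B' i j|) :
    catNorm A B c ≤ catNorm A B' c :=
  ciSup_mono (Set.finite_range _).bddAbove fun i => by
    have := Finset.sum_le_sum fun j (_ : j ∈ Finset.univ) => hB i j
    linarith

theorem catNorm_le_catNorm_smul {n m p : ℕ} (A : Matrix (Fin n) (Fin m) ℝ)
    (B : Matrix (Fin n) (Fin p) ℝ) (c : Fin n → ℝ) {lam : ℝ} (hlam : 1 ≤ |lam|) :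
    catNorm A B c ≤ catNorm A (lam • B) c :=
  catNorm_mono_abs A c fun i j => by
    rw [Matrix.smul_apply, smul_eq_mul, abs_mul]
    exact le_mul_of_one_le_left (abs_nonneg _) hlam

/-- **Proposition 1: the δISS condition implies the ISS condition.** -/
theorem deltaISS_condition_implies_ISS_condition {nu nx : ℕ}
    (Wz Wf Wr : Matrix (Fin nx) (Fin nu) ℝ)
    (Uz Uf Ur : Matrix (Fin nx) (Fin nx) ℝ)
    (bz bf br : Fin nx → ℝ)
    (lam : ℝ) (hlam : 1 ≤ lam)
    (hcond : matNorm Ur * ((1 / 4) * lam * matNorm Uf + _root_.sigmoid (catNorm Wf (lam • Uf) bf)) <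
      1 - (1 / 4) * ((lam + Real.tanh (catNorm Wr (lam • Ur) br)) /
        (1 - _root_.sigmoid (catNorm Wz (lam • Uz) bz))) * matNorm Uz) :
    matNorm Ur * _root_.sigmoid (catNorm Wf Uf bf) < 1 := by
  have hsigma : _root_.sigmoid (catNorm Wf Uf bf) ≤ _root_.sigmoid (catNorm Wf (lam • Uf) bf) :=
    _root_.sigmoid_monotone <| catNorm_le_catNorm_smul Wf Uf bf <| hlam.trans (le_abs_self lam)
  have htanh : 0 ≤ tanh (catNorm Wr (lam • Ur) br) :=
    tanh_nonneg (catNorm_nonneg Wr (lam • Ur) br)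
  have hmargin : 0 ≤ (1 / 4) * ((lam + tanh (catNorm Wr (lam • Ur) br)) /
      (1 - _root_.sigmoid (catNorm Wz (lam • Uz) bz))) * matNorm Uz := by
    have hz := _root_.sigmoid_lt_one (catNorm Wz (lam • Uz) bz)
    have hfrac := div_nonneg (by linarith : 0 ≤ lam + tanh (catNorm Wr (lam • Ur) br))
      (by linarith : 0 ≤ 1 - _root_.sigmoid (catNorm Wz (lam • Uz) bz))
    exact mul_nonneg (mul_nonneg (by norm_num) hfrac) (matNorm_nonneg Uz)
  have hUf : 0 ≤ (1 / 4) * lam * matNorm Uf :=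
    mul_nonneg (by linarith) (matNorm_nonneg Uf)
  calc matNorm Ur * _root_.sigmoid (catNorm Wf Uf bf)
      ≤ matNorm Ur * ((1 / 4) * lam * matNorm Uf + _root_.sigmoid (catNorm Wf (lam • Uf) bf)) :=
        mul_le_mul_of_nonneg_left (le_add_of_nonneg_of_le hUf hsigma) (matNorm_nonneg Ur)
    _ < _ := hcond
    _ ≤ 1 := sub_le_self 1 hmargin
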